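/- arXiv:1609.00983 — 5 statements merged into one kernel-verified Lean document; each statement's English description precedes it below -/
import Mathlib

section
/- The star K_{1,m} has an intersection representation by axis-aligned closed unit n-cubes in ℝ^n if and only if m ≤ 2^n. -/
/-- The axis-aligned closed unit cube in `ℝ^n` with center `c`. -/
def unitCube {n : ℕ} (c : Fin n → ℝ) : Set (Fin n → ℝ) :=
  {x | ∀ i, |x i - c i| ≤ 1 / 2}

lemma unitCube_inter_nonempty {n : ℕ} (a b : Fin n → ℝ) :
    (unitCube a ∩ unitCube b).Nonempty ↔ ∀ i, |a i - b i| ≤ 1 := by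
  constructor
  · rintro ⟨x, hxa, hxb⟩ i
    have h1 := hxa i
    have h2 := hxb i
    calc |a i - b i| = |(a i - x i) + (x i - b i)| := by ring_nf
      _ ≤ |a i - x i| + |x i - b i| := abs_add_le _ _
      _ ≤ 1/2 + 1/2 := add_le_add (by rw [abs_sub_comm]; exact h1) h2
      _ = 1 := by norm_num
  · intro h
    refine ⟨fun i => (a i + b i) / 2, fun i => ?_, fun i => ?_⟩
    · have := h i; rw [abs_le] at this ⊢
      constructor <;> [linarith [this.2]; linarith [this.1]]
    · have := h i; rw [abs_le] at this ⊢
      constructor <;> [linarith [this.1]; linarith [this.2]]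

/-- The star `K_{1,m}` (center `none`, leaves `some j`) has an intersection representation
by axis-aligned closed unit `n`-cubes in `ℝ^n` if and only if `m ≤ 2^n`. -/
theorem star_unit_cube_intersection_iff (n m : ℕ) :
    (∃ c : Option (Fin m) → Fin n → ℝ,
      ∀ u v : Option (Fin m), u ≠ v →
        ((unitCube (c u) ∩ unitCube (c v)).Nonempty ↔ (u = none ∨ v = none))) ↔
      m ≤ 2 ^ n := by
  constructor
  · rintro ⟨c, hc⟩
    have hleaf : ∀ j : Fin m, ∀ i, |c (some j) i - c none i| ≤ 1 := by
      intro j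
      rw [← unitCube_inter_nonempty]
      exact (hc (some j) none (by simp)).2 (Or.inr rfl)
    set s : Fin m → (Fin n → Bool) := fun j i => decide (0 ≤ c (some j) i - c none i)
      with hs
    have hinj : Function.Injective s := by
      intro j k hjk
      by_contra hne
      have hrep := hc (some j) (some k) (by simpa using hne)
      have hnon : (unitCube (c (some j)) ∩ unitCube (c (some k))).Nonempty := by
        rw [unitCube_inter_nonempty]
        intro i
        have h1 := hleaf j i
        have h2 := hleaf k i
        have hsi : s j i = s k i := by rw [hjk]
        simp only [hs, decide_eq_decide] at hsi
        rw [abs_le] at h1 h2 ⊢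
        rcases le_or_gt 0 (c (some j) i - c none i) with h | h
        · have hk' := hsi.1 h
          constructor <;> [linarith [h2.2]; linarith [h1.2]]
        · have hk' : ¬ (0 ≤ c (some k) i - c none i) := fun hh => absurd (hsi.2 hh) (not_le.2 h)
          push_neg at hk'
          constructor <;> [linarith [h1.1]; linarith [h2.1]]
      rw [hrep] at hnon
      simp at hnon
    calc m = Fintype.card (Fin m) := (Fintype.card_fin m).symm
      _ ≤ Fintype.card (Fin n → Bool) := Fintype.card_le_of_injective s hinj
      _ = 2 ^ n := by simp
  · intro hm
    have hcard : Fintype.card (Fin m) ≤ Fintype.card (Fin n → Bool) := by simpa using hm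
    obtain ⟨f⟩ := Function.Embedding.nonempty_of_card_le hcard
    refine ⟨fun u => Option.elim u (fun _ => 0) (fun j i => if f j i then 1 else -1), ?_⟩
    intro u v huv
    match u, v with
    | none, none => exact absurd rfl huv
    | none, some j =>
        simp only [Option.elim]
        constructor
        · intro _; exact Or.inl trivial
        · intro _
          rw [unitCube_inter_nonempty]
          intro i
          by_cases h : f j i <;> simp [h]
    | some j, none =>
        simp only [Option.elim]
        constructor
        · intro _; exact Or.inr trivial
        · intro _
          rw [unitCube_inter_nonempty]
          intro i
          by_cases h : f j i <;> simp [h]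
    | some j, some k =>
        have hjk : j ≠ k := by simpa using huv
        constructor
        · intro hnon
          exfalso
          rw [unitCube_inter_nonempty] at hnon
          have hfd : f j ≠ f k := fun h => hjk (f.injective h)
          obtain ⟨i, hi⟩ := Function.ne_iff.1 hfd
          have := hnon i
          simp only [Option.elim] at this
          rcases Bool.eq_false_or_eq_true (f j i) with h1 | h1 <;>
            rcases Bool.eq_false_or_eq_true (f k i) with h2 | h2 <;>
            simp [h1, h2] at this hi <;> norm_num at this
        · rintro (h | h) <;> simp at h
end

section
/- If a finite tree T has an intersection representation by axis-aligned closed unit n-cubes in ℝ^n, then the maximum degree of T is at most 2^n. -/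
lemma acyclic_triangle_free {V : Type*} {T : SimpleGraph V} (hA : T.IsAcyclic)
    {u v w : V} (huv : T.Adj u v) (hvw : T.Adj v w) (huw : T.Adj u w) : False := by
  have hne_uw : u ≠ w := huw.ne
  have hne_uv : u ≠ v := huv.ne
  have hne_vw : v ≠ w := hvw.ne
  apply hA (SimpleGraph.Walk.cons huv (SimpleGraph.Walk.cons hvw
    (SimpleGraph.Walk.cons huw.symm SimpleGraph.Walk.nil)))
  simp only [SimpleGraph.Walk.isCycle_def, SimpleGraph.Walk.isTrail_def,
    SimpleGraph.Walk.edges_cons, SimpleGraph.Walk.edges_nil, SimpleGraph.Walk.support_cons,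
    SimpleGraph.Walk.support_nil, List.tail_cons, List.nodup_cons, List.mem_cons,
    List.not_mem_nil, List.mem_singleton, List.nodup_nil, Sym2.eq, Sym2.rel_iff',
    Prod.mk.injEq, Prod.swap_prod_mk]
  aesop

/-- If a finite tree `T` has an intersection representation by axis-aligned closed unit
`n`-cubes in `ℝ^n`, then the maximum degree of `T` is at most `2^n`. -/
theorem tree_cubicity_maxDegree_le {V : Type*} [Fintype V] (T : SimpleGraph V)
    (hT : T.IsTree) (n : ℕ) (c : V → Fin n → ℝ)
    (hrep : ∀ u v : V, u ≠ v →
      ((unitCube (c u) ∩ unitCube (c v)).Nonempty ↔ T.Adj u v)) :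
    ∀ v, (T.neighborSet v).ncard ≤ 2 ^ n := by
  intro v
  classical
  have key : ∀ u ∈ T.neighborSet v, ∀ w ∈ T.neighborSet v,
      (fun i => decide (c u i ≤ c v i)) = (fun i => decide (c w i ≤ c v i)) → u = w := by
    intro u hu w hw hf
    by_contra hne
    have huv : T.Adj v u := hu
    have hwv : T.Adj v w := hw
    -- cubes of u and w intersect
    have hint : (unitCube (c u) ∩ unitCube (c w)).Nonempty := by
      rw [unitCube_inter_nonempty]
      intro i
      have h1 := (unitCube_inter_nonempty _ _).mp ((hrep u v huv.ne.symm).mpr huv.symm) i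
      have h2 := (unitCube_inter_nonempty _ _).mp ((hrep w v hwv.ne.symm).mpr hwv.symm) i
      have hd := congrFun hf i
      simp only [decide_eq_decide] at hd
      rw [abs_le] at h1 h2 ⊢
      rcases le_or_gt (c u i) (c v i) with h | h
      · have := hd.mp h
        constructor <;> linarith [h1.1, h1.2, h2.1, h2.2]
      · have : ¬ c w i ≤ c v i := fun hh => h.not_ge (hd.mpr hh)
        push_neg at this
        constructor <;> linarith [h1.1, h1.2, h2.1, h2.2]
    have : T.Adj u w := (hrep u w hne).mp hint
    exact acyclic_triangle_free hT.IsAcyclic huv.symm hwv this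
  have hinj : Set.InjOn (fun u => (fun i => decide (c u i ≤ c v i))) (T.neighborSet v) :=
    fun u hu w hw h => key u hu w hw h
  calc (T.neighborSet v).ncard ≤ (Set.univ : Set (Fin n → Bool)).ncard :=
      Set.ncard_le_ncard_of_injOn _ (fun a _ => Set.mem_univ _) hinj Set.finite_univ
  _ = 2 ^ n := by simp [Set.ncard_univ, Nat.card_eq_fintype_card]
end

section
/- Let c, c_1, ..., c_m ∈ ℝ^n be centers of axis-aligned closed unit cubes such that each cube centered at c_j intersects the cube centered at c, but the cubes centered at c_1,...,c_m are pairwise disjoint. Then m ≤ 2^n. -/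
/-- If the unit cubes centered at `f 1, …, f m` all intersect the unit cube centered at `c`
but are pairwise disjoint, then `m ≤ 2^n`. -/
theorem pairwise_disjoint_unitCubes_touching_le (n m : ℕ) (c : Fin n → ℝ)
    (f : Fin m → Fin n → ℝ)
    (hmeet : ∀ j, (unitCube c ∩ unitCube (f j)).Nonempty)
    (hdisj : ∀ j k, j ≠ k → unitCube (f j) ∩ unitCube (f k) = ∅) :
    m ≤ 2 ^ n := by
  have hclose : ∀ j i, |f j i - c i| ≤ 1 := by
    intro j i
    obtain ⟨x, hx, hxf⟩ := hmeet j
    have h1 := hx i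
    have h2 := hxf i
    have := abs_sub (f j i) (c i)
    calc |f j i - c i| = |(f j i - x i) + (x i - c i)| := by ring_nf
      _ ≤ |f j i - x i| + |x i - c i| := abs_add_le _ _
      _ ≤ 1/2 + 1/2 := by
          have : |f j i - x i| = |x i - f j i| := abs_sub_comm _ _
          linarith
      _ = 1 := by norm_num
  have key : Function.Injective (fun j : Fin m => fun i : Fin n => decide (f j i ≤ c i)) := by
    intro j k hjk
    by_contra hne
    have hdj := hdisj j k hne
    have hsame : ∀ i, (f j i ≤ c i ↔ f k i ≤ c i) := by
      intro i
      have := congrFun hjk i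
      simp only [decide_eq_decide] at this
      exact this
    -- midpoint lies in both cubes
    have : ((fun i => (f j i + f k i) / 2) ∈ unitCube (f j) ∩ unitCube (f k)) := by
      have hd : ∀ i, |f j i - f k i| ≤ 1 := by
        intro i
        have hj := hclose j i
        have hk := hclose k i
        rcases le_or_gt (f j i) (c i) with h | h
        · have hk' : f k i ≤ c i := (hsame i).mp h
          rw [abs_le] at hj hk ⊢
          constructor <;> linarith
        · have hk' : ¬ f k i ≤ c i := fun hh => absurd ((hsame i).mpr hh) (not_le.mpr h)
          push_neg at hk'
          rw [abs_le] at hj hk ⊢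
          constructor <;> linarith
      constructor
      · intro i
        have := hd i
        rw [abs_le] at this ⊢
        constructor <;> [linarith; linarith]
      · intro i
        have := hd i
        rw [abs_le] at this ⊢
        constructor <;> [linarith; linarith]
    rw [hdj] at this
    exact this
  calc m = Fintype.card (Fin m) := (Fintype.card_fin m).symm
    _ ≤ Fintype.card (Fin n → Bool) := Fintype.card_le_of_injective _ key
    _ = 2 ^ n := by simp
end

section
/- Let T be a finite tree and let T_1, ..., T_m be subtrees of T such that any two distinct subtrees share at most one vertex of T and each vertex of T lies in at most ℓ of the subtrees. Then the subtrees can be colored with ℓ colors so that subtrees sharing a vertex receive distinct colors. -/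
/-!
Root the tree at a vertex `r` and let the top of a subtree be its vertex nearest to `r`. The top
of a subtree lies on the path from each of its vertices to `r`. Hence if two subtrees meet at `u`,
both tops lie on the path from `u` to `r`, and the top of the deeper one lies in the other
subtree. Colouring the subtrees greedily by increasing depth of their tops, the subtrees already
coloured that meet `Sᵢ` all contain the top of `Sᵢ`, so fewer than `ℓ` colours are forbidden.
-/

namespace SimpleGraph

def intersectionGraph {ι α : Type*} (S : ι → Set α) : SimpleGraph ι where
  Adj i j := i ≠ j ∧ (S i ∩ S j).Nonempty
  symm := ⟨fun _ _ h => ⟨h.1.symm, Set.inter_comm _ _ ▸ h.2⟩⟩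

theorem colorable_of_forall_ncard_adj_le_lt {ι β : Type*} [Finite ι] [LinearOrder β]
    (G : SimpleGraph ι) (f : ι → β) {k : ℕ}
    (h : ∀ i, {j | G.Adj i j ∧ f j ≤ f i}.ncard < k) : G.Colorable k := by
  classical
  have : Fintype ι := Fintype.ofFinite ι
  suffices ∀ s : Finset ι, ∃ c : ι → Fin k, ∀ i ∈ s, ∀ j ∈ s, G.Adj i j → c i ≠ c j by
    obtain ⟨c, hc⟩ := this Finset.univ
    exact ⟨Coloring.mk c fun hij => hc _ (Finset.mem_univ _) _ (Finset.mem_univ _) hij⟩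
  intro s
  induction s using Finset.induction_on_max_value f with
  | empty => exact ⟨fun i => ⟨0, (h i).trans_le' (Nat.zero_le _)⟩, by simp⟩
  | insert a s has hmax ih =>
    obtain ⟨c, hc⟩ := ih
    have hused : ((s.filter (G.Adj a)).image c).card < (Finset.univ : Finset (Fin k)).card := by
      calc ((s.filter (G.Adj a)).image c).card ≤ (s.filter (G.Adj a)).card := Finset.card_image_le
        _ = (↑(s.filter (G.Adj a)) : Set ι).ncard := (Set.ncard_coe_finset _).symm
        _ ≤ {j | G.Adj a j ∧ f j ≤ f a}.ncard := Set.ncard_le_ncard fun j hj => by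
          simp only [Finset.coe_filter, Set.mem_ofPred_eq] at hj
          exact ⟨hj.2, hmax j hj.1⟩
        _ < k := h a
        _ = _ := (Finset.card_fin k).symm
    obtain ⟨x, -, hx⟩ := Finset.exists_mem_notMem_of_card_lt_card hused
    have hfree : ∀ j ∈ s, G.Adj a j → x ≠ c j := fun j hj hadj hxj =>
      hx (Finset.mem_image.mpr ⟨j, Finset.mem_filter.mpr ⟨hj, hadj⟩, hxj.symm⟩)
    have hne : ∀ j ∈ s, j ≠ a := fun j hj hja => has (hja ▸ hj)
    refine ⟨Function.update c a x, fun i hi j hj hij => ?_⟩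
    rw [Finset.mem_insert] at hi hj
    rcases hi with rfl | hi <;> rcases hj with rfl | hj
    · exact (G.irrefl hij).elim
    · simpa [hne j hj] using hfree j hj hij
    · simpa [hne i hi] using (hfree i hi hij.symm).symm
    · simpa [hne i hi, hne j hj] using hc i hi j hj hij

variable {V : Type*} {G : SimpleGraph V} {s : Set V} {r t u v w : V}

theorem Walk.IsPath.append {p : G.Walk u v} {q : G.Walk v w} (hp : p.IsPath) (hq : q.IsPath)
    (h : ∀ x ∈ p.support, x ∈ q.support → x = v) : (p.append q).IsPath := by
  rw [Walk.isPath_def, Walk.support_append]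
  refine hp.support_nodup.append (hq.support_nodup.sublist q.support.tail_sublist) ?_
  intro x hxp hxq
  obtain rfl := h x hxp (List.mem_of_mem_tail hxq)
  have hnodup := hq.support_nodup
  rw [← q.cons_tail_support] at hnodup
  exact (List.nodup_cons.mp hnodup).1 hxq

theorem IsAcyclic.length_eq_dist (hG : G.IsAcyclic) {p : G.Walk u v} (hp : p.IsPath) :
    p.length = G.dist u v := by
  obtain ⟨q, hq⟩ := p.reachable.exists_walk_length_eq_dist
  cases congrArg Subtype.val
    ((hG.subsingleton_path u v).elim ⟨p, hp⟩ ⟨q, q.isPath_of_length_eq_dist hq⟩)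
  exact hq

theorem IsAcyclic.dist_add_dist_of_mem_support (hG : G.IsAcyclic) {p : G.Walk u v}
    (hp : p.IsPath) (hw : w ∈ p.support) : G.dist u w + G.dist w v = G.dist u v := by
  classical
  rw [← hG.length_eq_dist (hp.takeUntil hw), ← hG.length_eq_dist (hp.dropUntil hw),
    ← hG.length_eq_dist hp, ← Walk.length_append, p.take_spec hw]

theorem IsAcyclic.mem_of_mem_support (hG : G.IsAcyclic) (hs : (G.induce s).Preconnected)
    {p : G.Walk u v} (hp : p.IsPath) (hu : u ∈ s) (hv : v ∈ s) : ∀ x ∈ p.support, x ∈ s := by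
  classical
  obtain ⟨q⟩ := hs ⟨u, hu⟩ ⟨v, hv⟩
  have hpq : p = (q.map (Embedding.induce s).toHom).bypass := congrArg Subtype.val
    ((hG.subsingleton_path u v).elim ⟨p, hp⟩ ⟨_, Walk.bypass_isPath _⟩)
  have hmap : ∀ x ∈ (q.map (Embedding.induce s).toHom).support, x ∈ s := by
    simp only [Walk.support_map, List.mem_map]
    rintro x ⟨y, -, rfl⟩
    exact y.2
  rw [hpq]
  exact fun x hx => hmap x (Walk.support_bypass_subset_support _ hx)

theorem IsTree.mem_support_of_isMinOn (hG : G.IsTree) (hs : (G.induce s).Preconnected)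
    (ht : t ∈ s) (hmin : IsMinOn (G.dist · r) s t) (hu : u ∈ s) {p : G.Walk u r}
    (hp : p.IsPath) : t ∈ p.support := by
  obtain ⟨q, hq, -⟩ := hG.existsUnique_path u t
  obtain ⟨q', hq', -⟩ := hG.existsUnique_path t r
  have hqq' : (q.append q').IsPath := hq.append hq' fun x hxq hxq' => by
    have hsplit := hG.isAcyclic.dist_add_dist_of_mem_support hq' hxq'
    have hle := isMinOn_iff.mp hmin x (hG.isAcyclic.mem_of_mem_support hs hq hu ht x hxq)
    exact ((hG.connected.preconnected t x).dist_eq_zero_iff.mp (by omega)).symm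
  cases congrArg Subtype.val ((hG.isAcyclic.subsingleton_path u r).elim ⟨p, hp⟩ ⟨_, hqq'⟩)
  exact (Walk.mem_support_append_iff _ _).mpr (Or.inl q.end_mem_support)

theorem IsTree.mem_of_isMinOn_of_dist_le (hG : G.IsTree) {s' : Set V} {t' : V}
    (hs : (G.induce s).Preconnected) (hs' : (G.induce s').Preconnected) (ht : t ∈ s)
    (ht' : t' ∈ s') (hmin : IsMinOn (G.dist · r) s t) (hmin' : IsMinOn (G.dist · r) s' t')
    (hu : u ∈ s ∩ s') (hle : G.dist t' r ≤ G.dist t r) : t ∈ s' := by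
  classical
  obtain ⟨p, hp, -⟩ := hG.existsUnique_path u r
  have htp := hG.mem_support_of_isMinOn hs ht hmin hu.1 hp
  have ht'p := hG.mem_support_of_isMinOn hs' ht' hmin' hu.2 hp
  rw [← p.take_spec ht'p, Walk.mem_support_append_iff] at htp
  rcases htp with htp | htp
  · exact hG.isAcyclic.mem_of_mem_support hs' (hp.takeUntil ht'p) hu.2 ht' t htp
  · have hsplit := hG.isAcyclic.dist_add_dist_of_mem_support (hp.dropUntil ht'p) htp
    obtain rfl := (hG.connected.preconnected t' t).dist_eq_zero_iff.mp (by omega)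
    exact ht'

end SimpleGraph

open SimpleGraph in
theorem subtrees_proper_coloring_general {V : Type*}
    (T : SimpleGraph V) (hT : T.IsTree) (m ℓ : ℕ) (S : Fin m → Set V)
    (hne : ∀ i, (S i).Nonempty)
    (hconn : ∀ i, (T.induce (S i)).Connected)
    (hℓ : ∀ v : V, {i | v ∈ S i}.ncard ≤ ℓ) :
    ∃ col : Fin m → Fin ℓ,
      ∀ i j, i ≠ j → (S i ∩ S j).Nonempty → col i ≠ col j := by
  obtain ⟨r⟩ := hT.connected.nonempty
  let top i := Function.argminOn (T.dist · r) (S i) (hne i)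
  have htop_mem i : top i ∈ S i := Function.argminOn_mem _ _ _
  have htop_min i : IsMinOn (T.dist · r) (S i) (top i) :=
    isMinOn_iff.mpr fun _ hx => Function.argminOn_le (T.dist · r) _ hx
  have hcol : (intersectionGraph S).Colorable ℓ := by
    refine colorable_of_forall_ncard_adj_le_lt _ (fun i => T.dist (top i) r) fun i => ?_
    refine (Set.ncard_lt_ncard ?_).trans_le (hℓ (top i))
    have hsub : {j | (intersectionGraph S).Adj i j ∧ T.dist (top j) r ≤ T.dist (top i) r} ⊆
        {j | top i ∈ S j} := fun j ⟨⟨_, hmeet⟩, hle⟩ =>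
      hT.mem_of_isMinOn_of_dist_le (hconn i).preconnected (hconn j).preconnected
        (htop_mem i) (htop_mem j) (htop_min i) (htop_min j) hmeet.some_mem hle
    exact (Set.ssubset_iff_of_subset hsub).mpr ⟨i, htop_mem i, fun hi => hi.1.1 rfl⟩
  obtain ⟨c⟩ := hcol
  exact ⟨c, fun i j hij hmeet => c.valid ⟨hij, hmeet⟩⟩

/-- If `S 1, …, S m` are subtrees of a finite tree `T` (nonempty vertex sets inducing
connected subgraphs) such that any two distinct subtrees share at most one vertex and
every vertex lies in at most `ℓ` subtrees, then the subtrees can be colored with `ℓ`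
colors so that subtrees sharing a vertex receive distinct colors. -/
theorem subtrees_proper_coloring {V : Type*} [Fintype V]
    (T : SimpleGraph V) (hT : T.IsTree) (m ℓ : ℕ) (S : Fin m → Set V)
    (hne : ∀ i, (S i).Nonempty)
    (hconn : ∀ i, (T.induce (S i)).Connected)
    (hshare : ∀ i j, i ≠ j → (S i ∩ S j).Subsingleton)
    (hℓ : ∀ v : V, {i | v ∈ S i}.ncard ≤ ℓ) :
    ∃ col : Fin m → Fin ℓ,
      ∀ i j, i ≠ j → (S i ∩ S j).Nonempty → col i ≠ col j :=
  subtrees_proper_coloring_general T hT m ℓ S hne hconn hℓ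
end

section
/- Subtrees of a tree have the Helly property: if T_1, ..., T_m are subtrees of a finite tree T such that every two of them share a vertex, then all of them share a common vertex. -/
open SimpleGraph

section Helly

variable {V : Type*} [DecidableEq V] {T : SimpleGraph V}

/-- A set is path-closed if every path between two of its members stays inside it. -/
private def PCl (T : SimpleGraph V) (S : Set V) : Prop :=
  ∀ a ∈ S, ∀ b ∈ S, ∀ w : T.Walk a b, w.IsPath → ∀ v ∈ w.support, v ∈ S

private lemma conn_pcl (hT : T.IsTree) {S : Set V} (h : (T.induce S).Connected) :
    PCl T S := by
  intro a ha b hb w hw v hv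
  obtain ⟨w0⟩ := h.preconnected ⟨a, ha⟩ ⟨b, hb⟩
  let f : T.induce S →g T := ⟨Subtype.val, fun hadj => hadj⟩
  let w1 : T.Walk a b := w0.map f
  have hsub : ∀ x ∈ w1.support, x ∈ S := by
    intro x hx
    rw [Walk.support_map] at hx
    obtain ⟨y, _, rfl⟩ := List.mem_map.1 hx
    exact y.2
  have huniq : (⟨w, hw⟩ : T.Path a b) = w1.toPath := hT.IsAcyclic.path_unique _ _
  have : w.support = (w1.toPath : T.Walk a b).support := by rw [← huniq]
  rw [this] at hv
  exact hsub v (w1.support_toPath_subset hv)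

/-- Median: given paths `a→b` and `b→c` in a tree, there is a vertex on both and on a
path `a→c`. -/
private lemma median (hT : T.IsTree) :
    ∀ {a b c : V} (p : T.Walk a b) (r : T.Walk b c), p.IsPath → r.IsPath →
      ∃ (m : V) (q : T.Walk a c), q.IsPath ∧ m ∈ p.support ∧ m ∈ r.support ∧ m ∈ q.support := by
  intro a b c p
  induction p with
  | nil =>
    intro r _ hr
    exact ⟨_, r, hr, Walk.start_mem_support _, Walk.start_mem_support _,
      Walk.start_mem_support _⟩
  | @cons a a' b h p' ih =>
    intro r hp hr
    have hp' : p'.IsPath := hp.of_cons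
    have hanp : a ∉ p'.support := by
      have := hp.support_nodup
      simp only [Walk.support_cons, List.nodup_cons] at this
      exact this.1
    by_cases har : a ∈ r.support
    · obtain ⟨q0⟩ := hT.isConnected.preconnected a c
      exact ⟨a, q0.toPath, q0.toPath.2, Walk.start_mem_support _, har,
        Walk.start_mem_support _⟩
    · obtain ⟨m, q', hq', hmp', hmr, hmq'⟩ := ih r hp' hr
      by_cases haq : a ∈ q'.support
      · -- `a` is on the path `a' → c`; it must be the second vertex.
        by_cases hmd : m ∈ (q'.dropUntil a haq).support
        · exact ⟨m, q'.dropUntil a haq, hq'.dropUntil haq,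
            by simp [Walk.support_cons]; right; exact hmp', hmr, hmd⟩
        · -- then m lies on the prefix a' → a of q', which is the single edge
          have hqsplit := q'.take_spec haq
          have hmtake : m ∈ (q'.takeUntil a haq).support := by
            have : m ∈ q'.support := hmq'
            rw [← hqsplit, Walk.support_append, List.mem_append] at this
            rcases this with h1 | h1
            · exact h1
            · exact absurd (List.mem_of_mem_tail h1) hmd
          have htp : (q'.takeUntil a haq).IsPath := hq'.takeUntil haq
          have hedge : ((Walk.cons h.symm Walk.nil : T.Walk a' a)).IsPath := by
            simp [Walk.isPath_def, Walk.support_cons, h.ne']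
          have : (⟨q'.takeUntil a haq, htp⟩ : T.Path a' a)
              = ⟨Walk.cons h.symm Walk.nil, hedge⟩ := hT.IsAcyclic.path_unique _ _
          have hsupeq : (q'.takeUntil a haq).support = [a', a] := by
            have := congrArg (fun z : T.Path a' a => (z : T.Walk a' a).support) this
            simpa [Walk.support_cons] using this
          rw [hsupeq] at hmtake
          simp only [List.mem_cons, List.not_mem_nil, or_false] at hmtake
          rcases hmtake with rfl | rfl
          · -- m = a' : contradiction with a ∉ r.support
            exfalso
            have hdr : (r.dropUntil m hmr).IsPath := hr.dropUntil hmr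
            have : (⟨r.dropUntil m hmr, hdr⟩ : T.Path m c) = ⟨q', hq'⟩ :=
              hT.IsAcyclic.path_unique _ _
            have hsup : (r.dropUntil m hmr).support = q'.support := by
              have := congrArg (fun z : T.Path m c => (z : T.Walk m c).support) this
              simpa using this
            exact har (r.support_dropUntil_subset hmr (hsup ▸ haq))
          · exact absurd hmp' hanp
      · exact ⟨m, Walk.cons h q', hq'.cons haq,
          by simp [Walk.support_cons]; right; exact hmp', hmr,
          by simp [Walk.support_cons]; right; exact hmq'⟩

private lemma three (hT : T.IsTree) {A B C : Set V}
    (hA : PCl T A) (hB : PCl T B) (hC : PCl T C)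
    (hab : (A ∩ B).Nonempty) (hbc : (B ∩ C).Nonempty) (hac : (A ∩ C).Nonempty) :
    (A ∩ B ∩ C).Nonempty := by
  obtain ⟨c, hcA, hcB⟩ := hab
  obtain ⟨a, haB, haC⟩ := hbc
  obtain ⟨b, hbA, hbC⟩ := hac
  obtain ⟨p0⟩ := hT.isConnected.preconnected a b
  obtain ⟨r0⟩ := hT.isConnected.preconnected b c
  obtain ⟨m, q, hq, hmp, hmr, hmq⟩ := median hT (p0.toPath : T.Walk a b)
    (r0.toPath : T.Walk b c) p0.toPath.2 r0.toPath.2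
  refine ⟨m, ⟨⟨?_, ?_⟩, ?_⟩⟩
  · exact hA b hbA c hcA _ r0.toPath.2 m hmr
  · exact hB a haB c hcB q hq m hmq
  · exact hC a haC b hbC _ p0.toPath.2 m hmp

private lemma hellyPCl (hT : T.IsTree) :
    ∀ (n : ℕ) (F : Fin n → Set V), (∀ i, PCl T (F i)) →
      (∀ i j, (F i ∩ F j).Nonempty) → (⋂ i, F i).Nonempty := by
  intro n
  induction n with
  | zero =>
    intro F _ _
    haveI : Nonempty V := hT.isConnected.nonempty
    simpa using Set.univ_nonempty
  | succ n ih =>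
    intro F hF hp
    rcases Nat.eq_zero_or_pos n with h0 | hpos
    · subst h0
      obtain ⟨x, hx, -⟩ := hp 0 0
      exact ⟨x, Set.mem_iInter.2 fun i => by rw [show i = 0 from Fin.eq_of_val_eq (by omega)]; exact hx⟩
    · set L := Fin.last n with hL
      set G : Fin n → Set V := fun i => F i.castSucc ∩ F L with hG
      have hGpc : ∀ i, PCl T (G i) := fun i a ha b hb w hw v hv =>
        ⟨hF _ a ha.1 b hb.1 w hw v hv, hF _ a ha.2 b hb.2 w hw v hv⟩
      have hGpair : ∀ i j, (G i ∩ G j).Nonempty := by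
        intro i j
        obtain ⟨m, ⟨hm1, hm2⟩, hm3⟩ :=
          three hT (hF i.castSucc) (hF j.castSucc) (hF L) (hp _ _) (hp _ _) (hp _ _)
        exact ⟨m, ⟨hm1, hm3⟩, ⟨hm2, hm3⟩⟩
      obtain ⟨x, hx⟩ := ih G hGpc hGpair
      rw [Set.mem_iInter] at hx
      refine ⟨x, Set.mem_iInter.2 fun i => ?_⟩
      rcases Fin.eq_castSucc_or_eq_last i with ⟨j, rfl⟩ | rfl
      · exact (hx j).1
      · exact (hx ⟨0, hpos⟩).2

end Helly

/-- Helly property for subtrees of a tree: if `S 1, …, S m` are subtrees of a finite tree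
`T` (nonempty vertex sets inducing connected subgraphs) that pairwise share a vertex,
then all of them share a common vertex. -/
theorem subtrees_helly {V : Type*} [Fintype V]
    (T : SimpleGraph V) (hT : T.IsTree) (m : ℕ) (S : Fin m → Set V)
    (hne : ∀ i, (S i).Nonempty)
    (hconn : ∀ i, (T.induce (S i)).Connected)
    (hpair : ∀ i j, (S i ∩ S j).Nonempty) :
    (⋂ i, S i).Nonempty := by
  have : DecidableEq V := Classical.decEq V
  exact hellyPCl hT m S (fun i => conn_pcl hT (hconn i)) hpair
end
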